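/- Let 𝒢 be a family of connected non-trivial graphs on a common vertex set V. Let P_n be a path graph of order n ≥ 7 with n ≡ 1 (mod 5) or n ≡ 3 (mod 5), let C_n be the cycle graph obtained from P_n by joining its two leaves by an edge, and let B be a simultaneous adjacency basis of {P_n, C_n}. Then for every family ℋ = ℋ₁ ∪ ℋ₂ such that ℋ₁ is composed of path graphs with ℋ₁ ⊆ 𝒢_B(P_n) and P_n ∈ ℋ₁, and ℋ₂ is composed of cycle graphs with ℋ₂ ⊆ 𝒢_B(C_n) and C_n ∈ ℋ₂, it holds that Sd_A(𝒢⊙ℋ) = |V| · (⌊(2n+2)/5⌋ + 1) − 1. -/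

import Mathlib

open SimpleGraph

/-- `S` is a metric generator for `G`: every pair of distinct vertices is
distinguished by some element of `S` via the shortest-path distance. -/
def IsMetricGen {V : Type*} (G : SimpleGraph V) (S : Set V) : Prop :=
  ∀ u v : V, u ≠ v → ∃ s ∈ S, G.dist s u ≠ G.dist s v

/-- `S` is an adjacency generator for `G`. -/
def IsAdjGen {V : Type*} (G : SimpleGraph V) (S : Set V) : Prop :=
  ∀ x y : V, x ∉ S → y ∉ S → x ≠ y → ∃ s ∈ S, Xor' (G.Adj s x) (G.Adj s y)

/-- `S` is a simultaneous metric generator for the family `𝒢`. -/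
def IsSimMetricGen {V : Type*} (𝒢 : Set (SimpleGraph V)) (S : Set V) : Prop :=
  ∀ G ∈ 𝒢, IsMetricGen G S

/-- `S` is a simultaneous adjacency generator for the family `ℋ`. -/
def IsSimAdjGen {V : Type*} (ℋ : Set (SimpleGraph V)) (S : Set V) : Prop :=
  ∀ H ∈ ℋ, IsAdjGen H S

/-- The simultaneous metric dimension of a family of graphs. -/
noncomputable def Sd {V : Type*} (𝒢 : Set (SimpleGraph V)) : ℕ :=
  sInf {n | ∃ S : Set V, S.ncard = n ∧ IsSimMetricGen 𝒢 S}

/-- The simultaneous adjacency dimension of a family of graphs. -/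
noncomputable def SdA {V : Type*} (ℋ : Set (SimpleGraph V)) : ℕ :=
  sInf {n | ∃ S : Set V, S.ncard = n ∧ IsSimAdjGen ℋ S}

/-- The adjacency dimension of a graph. -/
noncomputable def adjDim {V : Type*} (G : SimpleGraph V) : ℕ := SdA {G}

/-- `B` is an adjacency basis of `G`. -/
def IsAdjBasis {V : Type*} (G : SimpleGraph V) (B : Set V) : Prop :=
  IsAdjGen G B ∧ B.ncard = adjDim G

/-- `B` is a simultaneous adjacency basis of the family `ℋ`. -/
def IsSimAdjBasis {V : Type*} (ℋ : Set (SimpleGraph V)) (B : Set V) : Prop :=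
  IsSimAdjGen ℋ B ∧ B.ncard = SdA ℋ

/-- `D` is a dominating set of `G`. -/
def IsDomSet {V : Type*} (G : SimpleGraph V) (D : Set V) : Prop :=
  ∀ v ∉ D, ∃ u ∈ D, G.Adj u v

/-- `D` is a simultaneous dominating set of the family `𝒢`. -/
def IsSimDomSet {V : Type*} (𝒢 : Set (SimpleGraph V)) (D : Set V) : Prop :=
  ∀ G ∈ 𝒢, IsDomSet G D

/-- The simultaneous domination number of a family of graphs. -/
noncomputable def Sgamma {V : Type*} (𝒢 : Set (SimpleGraph V)) : ℕ :=
  sInf {n | ∃ D : Set V, D.ncard = n ∧ IsSimDomSet 𝒢 D}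

/-- The domination number of a graph. -/
noncomputable def domNum {V : Type*} (G : SimpleGraph V) : ℕ := Sgamma {G}

/-- `γ'(G) = min over vertices `v` of `γ(G - v)`. -/
noncomputable def gammaPrime {V : Type*} (G : SimpleGraph V) : ℕ :=
  sInf {n | ∃ v : V, n = domNum (G.induce {v}ᶜ)}

/-- The corona product `G ⊙ H`: one copy of `G` together with a copy of `H`
for each vertex `i` of `G`, joining `i` to every vertex of its copy. -/
def corona {V V' : Type*} (G : SimpleGraph V) (H : SimpleGraph V') :
    SimpleGraph (V ⊕ V × V') where
  Adj x y :=
    match x, y with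
    | Sum.inl i, Sum.inl j => G.Adj i j
    | Sum.inl i, Sum.inr p => i = p.1
    | Sum.inr p, Sum.inl j => p.1 = j
    | Sum.inr p, Sum.inr q => p.1 = q.1 ∧ H.Adj p.2 q.2
  symm := by
    refine ⟨?_⟩
    rintro (i | p) (j | q) h
    · exact G.adj_symm h
    · exact h.symm
    · exact h.symm
    · exact ⟨h.1.symm, H.adj_symm h.2⟩
  loopless := by
    refine ⟨?_⟩
    rintro (i | p) h
    · exact G.loopless.irrefl i h
    · exact H.loopless.irrefl p.2 h.2

/-- The family `{G ⊙ H : G ∈ 𝒢, H ∈ ℋ}` of corona products. -/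
def coronaFam {V V' : Type*} (𝒢 : Set (SimpleGraph V)) (ℋ : Set (SimpleGraph V')) :
    Set (SimpleGraph (V ⊕ V × V')) :=
  {K | ∃ G ∈ 𝒢, ∃ H ∈ ℋ, K = corona G H}

/-- The join `G + H` of two (vertex-disjoint) graphs. -/
def joinG {V₁ V₂ : Type*} (G : SimpleGraph V₁) (H : SimpleGraph V₂) :
    SimpleGraph (V₁ ⊕ V₂) where
  Adj x y :=
    match x, y with
    | Sum.inl a, Sum.inl b => G.Adj a b
    | Sum.inl _, Sum.inr _ => True
    | Sum.inr _, Sum.inl _ => True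
    | Sum.inr a, Sum.inr b => H.Adj a b
  symm := by
    refine ⟨?_⟩
    rintro (a | a) (b | b) h
    · exact G.adj_symm h
    · trivial
    · trivial
    · exact H.adj_symm h
  loopless := by
    refine ⟨?_⟩
    rintro (a | a) h
    · exact G.loopless.irrefl a h
    · exact H.loopless.irrefl a h

/-- The family `{G + H : G ∈ 𝒢, H ∈ ℋ}` of joins. -/
def joinFam {V₁ V₂ : Type*} (𝒢 : Set (SimpleGraph V₁)) (ℋ : Set (SimpleGraph V₂)) :
    Set (SimpleGraph (V₁ ⊕ V₂)) :=
  {K | ∃ G ∈ 𝒢, ∃ H ∈ ℋ, K = joinG G H}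

/-- The family `𝒢_B(G)`: all graphs `G'` such that, for some permutation `f` of the
vertex set fixing `B` pointwise, `N_{G'}(x) = f(N_G(x))` for every `x ∈ B`. -/
def GBfam {V : Type*} (G : SimpleGraph V) (B : Set V) : Set (SimpleGraph V) :=
  {G' | ∃ f : Equiv.Perm V, (∀ x ∈ B, f x = x) ∧
    ∀ x ∈ B, G'.neighborSet x = f '' (G.neighborSet x)}

/-!
Write `r = ⌊(2n + 2) / 5⌋`. A discharging argument shows `2n ≤ 5|S| + 2` for every adjacency
generator `S` of `C_n`, and `2n ≤ 5|S|` if `S` also dominates `C_n`. The vertices `≡ 1, 3 (mod 5)`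
give a simultaneous generator of `P_n` and `C_n` of size `r`, so `|B| = r`; and `B` remains a
generator, with no vertex adjacent to all of `B`, in every member of `𝒢_B(P_n) ∪ 𝒢_B(C_n)`.

Putting `B` into every copy of `H` and all vertices of `G` but one gives a generator of every
`G ⊙ H` of size `|V| (r + 1) - 1`. Conversely, a generator `S` meets every copy of `C_n` in at
least `r` vertices; if `S` meets `{i} ∪ V'_i` in only `r` vertices, then these do not dominate
the copy of `P_n`, which leaves a vertex of `G ⊙ P_n` with no neighbour in `S`. Two such vertices
would not be distinguished, so this happens for at most one `i`.
-/

open SimpleGraph Finset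

section AdjGen

variable {V : Type*} {G G' : SimpleGraph V} {S : Set V}

theorem isAdjGen_univ (G : SimpleGraph V) : IsAdjGen G Set.univ :=
  fun x _ hx => absurd (Set.mem_univ x) hx

theorem sdA_le_ncard {ℋ : Set (SimpleGraph V)} (hS : IsSimAdjGen ℋ S) : SdA ℋ ≤ S.ncard :=
  Nat.sInf_le ⟨S, rfl, hS⟩

theorem le_sdA {ℋ : Set (SimpleGraph V)} {k : ℕ} (h : ∀ S, IsSimAdjGen ℋ S → k ≤ S.ncard) :
    k ≤ SdA ℋ :=
  le_csInf ⟨_, Set.univ, rfl, fun G _ => isAdjGen_univ G⟩ (by rintro _ ⟨S, rfl, hS⟩; exact h S hS)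

theorem IsAdjGen.eq_of_forall_adj_iff (hS : IsAdjGen G S) {x y : V} (hx : x ∉ S) (hy : y ∉ S)
    (h : ∀ s ∈ S, G.Adj s x ↔ G.Adj s y) : x = y := by
  by_contra hxy
  obtain ⟨s, hs, hxor⟩ := hS x y hx hy hxy
  rw [h s hs] at hxor
  exact (xor_self _).mp hxor

def undominated (G : SimpleGraph V) (S : Set V) : Set V :=
  {v | v ∉ S ∧ ∀ s ∈ S, ¬G.Adj s v}

theorem undominated_eq_empty_iff : undominated G S = ∅ ↔ IsDomSet G S := by
  simp [Set.eq_empty_iff_forall_notMem, undominated, IsDomSet]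

theorem IsAdjGen.undominated_subsingleton (hS : IsAdjGen G S) : (undominated G S).Subsingleton :=
  fun _ hx _ hy =>
    hS.eq_of_forall_adj_iff hx.1 hy.1 fun s hs => iff_of_false (hx.2 s hs) (hy.2 s hs)

theorem IsDomSet.mono (h : G ≤ G') (hS : IsDomSet G S) : IsDomSet G' S :=
  fun v hv => (hS v hv).imp fun _ => And.imp_right (@h _ _)

theorem sum_smul_card_filter_adj [Fintype V] [DecidableRel G.Adj] {M : Type*} [AddCommMonoid M]
    (S : Finset V) (f : V → M) :
    ∑ v, #{s ∈ S | G.Adj s v} • f v = ∑ s ∈ S, ∑ v ∈ G.neighborFinset s, f v := by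
  simp only [Finset.card_filter, Finset.sum_smul, ite_smul, one_smul, zero_smul,
    neighborFinset_eq_filter, Finset.sum_filter]
  exact Finset.sum_comm

theorem card_filter_adj_le_degree [Fintype V] [DecidableRel G.Adj] (S : Finset V) (v : V) :
    #{s ∈ S | G.Adj s v} ≤ G.degree v :=
  Finset.card_le_card fun s hs => by simpa [adj_comm] using (Finset.mem_filter.1 hs).2

theorem IsAdjGen.eq_of_adj_of_card_filter_adj_eq_one [Fintype V] [DecidableRel G.Adj]
    {S : Finset V} (hS : IsAdjGen G S) {s x y : V} (hs : s ∈ S) (hx : x ∉ S) (hy : y ∉ S)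
    (hsx : G.Adj s x) (hsy : G.Adj s y) (hdx : #{t ∈ S | G.Adj t x} = 1)
    (hdy : #{t ∈ S | G.Adj t y} = 1) : x = y := by
  have honly : ∀ v, G.Adj s v → #{t ∈ S | G.Adj t v} = 1 → ∀ t ∈ S, G.Adj t v ↔ t = s := by
    intro v hsv hdv t ht
    obtain ⟨a, ha⟩ := Finset.card_eq_one.1 hdv
    have has : s = a := by
      simpa [ha] using (Finset.mem_filter.2 ⟨hs, hsv⟩ : s ∈ {t ∈ S | G.Adj t v})
    simpa [ht, has] using Finset.ext_iff.1 ha t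
  exact hS.eq_of_forall_adj_iff hx hy fun t ht => by rw [honly x hsx hdx t ht, honly y hsy hdy t ht]

theorem card_dominated_add_ncard_undominated [Fintype V] [DecidableEq V] [DecidableRel G.Adj]
    (S : Finset V) :
    #{v | v ∉ S ∧ #{s ∈ S | G.Adj s v} ≠ 0} + (undominated G S).ncard = Fintype.card V - #S := by
  have hundom : (undominated G S).ncard = #{v | v ∉ S ∧ #{s ∈ S | G.Adj s v} = 0} := by
    rw [← Set.ncard_coe_finset]
    congr 1
    ext v
    simp [undominated, Finset.filter_eq_empty_iff]
  rw [hundom, ← Finset.card_compl,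
    ← Finset.card_filter_add_card_filter_not (s := Sᶜ) (fun v => #{s ∈ S | G.Adj s v} ≠ 0)]
  congr 2 <;> ext v <;> simp

end AdjGen

section Cycle

variable {n : ℕ}

theorem cycleGraph_adj_iff_val (hn : 2 ≤ n) {u v : Fin n} :
    (cycleGraph n).Adj u v ↔ u.val + 1 = v.val ∨ v.val + 1 = u.val ∨
      u.val = 0 ∧ v.val = n - 1 ∨ v.val = 0 ∧ u.val = n - 1 := by
  rw [cycleGraph_adj']
  have := u.isLt
  have := v.isLt
  rcases lt_trichotomy u v with h | rfl | h
  · rw [Fin.coe_sub_iff_lt.2 h, Fin.coe_sub_iff_le.2 h.le]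
    rw [Fin.lt_def] at h
    omega
  · simp only [Fin.coe_sub_iff_le.2 le_rfl, Nat.sub_self]
    omega
  · rw [Fin.coe_sub_iff_lt.2 h, Fin.coe_sub_iff_le.2 h.le]
    rw [Fin.lt_def] at h
    omega

theorem cycleGraph_eq_pathGraph_sup (hn : 2 ≤ n) :
    cycleGraph n = pathGraph n ⊔ fromEdgeSet {s((⟨0, by omega⟩ : Fin n), ⟨n - 1, by omega⟩)} := by
  ext u v
  rw [cycleGraph_adj_iff_val hn, sup_adj, pathGraph_adj, fromEdgeSet_adj]
  simp only [Set.mem_singleton_iff, Sym2.eq_iff, Fin.ext_iff, ne_eq]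
  omega

theorem exists_not_adj_cycleGraph (hn : 3 ≤ n) {S : Set (Fin n)} (hS : 3 ≤ S.ncard) (v : Fin n) :
    ∃ s ∈ S, ¬(cycleGraph n).Adj s v := by
  obtain ⟨k, rfl⟩ : ∃ k, n = k + 2 := ⟨n - 2, by omega⟩
  by_contra! h
  have hsub : S ⊆ (cycleGraph (k + 2)).neighborSet v := fun s hs => (h s hs).symm
  rw [cycleGraph_neighborSet] at hsub
  have := Set.ncard_le_ncard hsub
  have := Set.ncard_insert_le (v - 1) {v + 1}
  rw [Set.ncard_singleton] at this
  omega

theorem two_mul_le_of_isAdjGen_cycleGraph (hn : 3 ≤ n) {S : Set (Fin n)}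
    (hS : IsAdjGen (cycleGraph n) S) :
    2 * n ≤ 5 * S.ncard + 2 * (undominated (cycleGraph n) S).ncard := by
  classical
  obtain ⟨k, rfl⟩ : ∃ k, n = k + 3 := ⟨n - 3, by omega⟩
  set G := cycleGraph (k + 3)
  lift S to Finset (Fin (k + 3)) using S.toFinite
  set d : Fin (k + 3) → ℕ := fun v => #{s ∈ S | G.Adj s v}
  -- `c` spreads a charge of 2 from each dominated vertex outside `S` evenly over its neighbours
  -- in `S`; a vertex of `S` receives at most 3, since its two neighbours cannot both have it as
  -- their only neighbour in `S`.
  set c : Fin (k + 3) → ℕ := fun v =>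
    if v ∈ S then 0 else if d v = 1 then 2 else if d v = 2 then 1 else 0
  have hpair : ∀ v : Fin (k + 3), v - 1 ≠ v + 1 := by
    intro v h
    simpa [cycleGraph_degree_two_le, h] using cycleGraph_degree_three_le (v := v)
  have hcd : ∀ v, d v • c v = if v ∉ S ∧ d v ≠ 0 then 2 else 0 := by
    intro v
    have : d v ≤ 2 := (card_filter_adj_le_degree S v).trans_eq cycleGraph_degree_three_le
    rcases (by omega : d v = 0 ∨ d v = 1 ∨ d v = 2) with h | h | h <;>
      by_cases hv : v ∈ S <;> simp [c, hv, h]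
  have hlocal : ∀ s ∈ S, c (s - 1) + c (s + 1) ≤ 3 := by
    intro s hs
    have hc : ∀ v, c v ≤ 2 := fun v => by simp only [c]; split_ifs <;> omega
    have hprivate : ∀ v, c v = 2 → v ∉ S ∧ d v = 1 := fun v hv => by
      simp only [c] at hv; split_ifs at hv <;> simp_all
    by_contra! h
    obtain ⟨hout₁, hd₁⟩ := hprivate (s - 1) (by have := hc (s - 1); have := hc (s + 1); omega)
    obtain ⟨hout₂, hd₂⟩ := hprivate (s + 1) (by have := hc (s - 1); have := hc (s + 1); omega)
    have hadj : ∀ v ∈ ({s - 1, s + 1} : Set _), G.Adj s v := by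
      simp [G, ← mem_neighborSet, cycleGraph_neighborSet]
    exact hpair s (hS.eq_of_adj_of_card_filter_adj_eq_one hs hout₁ hout₂
      (hadj _ (by simp)) (hadj _ (by simp)) hd₁ hd₂)
  have hcharge : 2 * #{v | v ∉ S ∧ d v ≠ 0} ≤ 3 * #S :=
    calc 2 * #{v | v ∉ S ∧ d v ≠ 0} = ∑ v, d v • c v := by
          simp only [hcd, Finset.sum_ite, Finset.sum_const_zero, Finset.sum_const, smul_eq_mul,
            add_zero, mul_comm]
      _ = ∑ s ∈ S, (c (s - 1) + c (s + 1)) := by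
          rw [sum_smul_card_filter_adj]
          refine Finset.sum_congr rfl fun s _ => ?_
          rw [cycleGraph_neighborFinset, Finset.sum_pair (hpair s)]
      _ ≤ ∑ s ∈ S, 3 := Finset.sum_le_sum hlocal
      _ = 3 * #S := by rw [Finset.sum_const, smul_eq_mul, mul_comm]
  have hsplit : #{v | v ∉ S ∧ d v ≠ 0} + (undominated G S).ncard = k + 3 - #S := by
    simpa only [Fintype.card_fin] using card_dominated_add_ncard_undominated (G := G) S
  have := Finset.card_le_univ S
  simp only [Fintype.card_fin] at this
  rw [Set.ncard_coe_finset]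
  omega

theorem IsAdjGen.two_mul_le_cycleGraph (hn : 3 ≤ n) {S : Set (Fin n)}
    (hS : IsAdjGen (cycleGraph n) S) : 2 * n ≤ 5 * S.ncard + 2 := by
  have := two_mul_le_of_isAdjGen_cycleGraph hn hS
  have := Set.ncard_le_one_iff_subsingleton.2 hS.undominated_subsingleton
  omega

theorem IsAdjGen.two_mul_le_cycleGraph_of_isDomSet (hn : 3 ≤ n) {S : Set (Fin n)}
    (hS : IsAdjGen (cycleGraph n) S) (hD : IsDomSet (cycleGraph n) S) : 2 * n ≤ 5 * S.ncard := by
  simpa [undominated_eq_empty_iff.2 hD] using two_mul_le_of_isAdjGen_cycleGraph hn hS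

def pathCycleIndices (n : ℕ) : Set ℕ :=
  {k | (k % 5 = 1 ∨ k % 5 = 3) ∧ k < 5 * (n / 5) ∨ n % 5 = 3 ∧ k = n - 1}

/-- A vertex `x < 5 * (n / 5)` outside this set has the neighbours `{x + 1}`, `{x - 1, x + 1}` or
`{x - 1}` in it according as `x ≡ 0, 2, 4 (mod 5)`; the vertex `5 * (n / 5)` has none, and for
`n ≡ 3 (mod 5)` the vertex after it has `{n - 1}`. These sets are pairwise distinct, in `C_n`
(where `0` may gain the neighbour `n - 1`) as well as in `P_n`. -/
def pathCycleGen (n : ℕ) : Set (Fin n) :=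
  Fin.val ⁻¹' pathCycleIndices n

theorem ncard_pathCycleGen_le :
    (pathCycleGen n).ncard ≤ (2 * n + 2) / 5 := by
  calc (pathCycleGen n).ncard
      ≤ (↑(Finset.range ((2 * n + 2) / 5)) : Set ℕ).ncard := by
        refine Set.ncard_le_ncard_of_injOn (fun x => 2 * (x.val / 5) + x.val % 5 / 3) ?_ ?_
          (Finset.finite_toSet _)
        · intro x hx
          simp only [pathCycleGen, pathCycleIndices, Set.mem_preimage, Set.mem_ofPred_eq] at hx
          simp only [Finset.coe_range, Set.mem_Iio]
          omega
        · intro x hx y hy hxy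
          simp only [pathCycleGen, pathCycleIndices, Set.mem_preimage, Set.mem_ofPred_eq] at hx hy
          simp only at hxy
          have := x.isLt
          have := y.isLt
          exact Fin.ext (by omega)
    _ = (2 * n + 2) / 5 := by simp

set_option maxHeartbeats 400000 in
theorem exists_separating_index {a b : ℕ} (hn : 7 ≤ n) (h15 : n % 5 = 1 ∨ n % 5 = 3)
    (ha : a < n) (hb : b < n) (hab : a ≠ b) (haD : a ∉ pathCycleIndices n)
    (hbD : b ∉ pathCycleIndices n) :
    ∃ w < n, w ∈ pathCycleIndices n ∧
      ((w + 1 = a ∨ a + 1 = w) ∧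
          ¬(w + 1 = b ∨ b + 1 = w ∨ w = 0 ∧ b = n - 1 ∨ b = 0 ∧ w = n - 1) ∨
        (w + 1 = b ∨ b + 1 = w) ∧
          ¬(w + 1 = a ∨ a + 1 = w ∨ w = 0 ∧ a = n - 1 ∨ a = 0 ∧ w = n - 1)) := by
  simp only [pathCycleIndices, Set.mem_ofPred_eq] at haD hbD ⊢
  have ha5 : a + 3 < n ∧ (a % 5 = 0 ∨ a % 5 = 2 ∨ a % 5 = 4) ∨
      a + 3 = n ∨ a + 2 = n ∨ a + 1 = n := by omega
  have hb5 : b + 3 < n ∧ (b % 5 = 0 ∨ b % 5 = 2 ∨ b % 5 = 4) ∨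
      b + 3 = n ∨ b + 2 = n ∨ b + 1 = n := by omega
  rcases h15 with h15 | h15 <;> rcases ha5 with ⟨ha3, ha5 | ha5 | ha5⟩ | ha5 | ha5 | ha5 <;>
    rcases hb5 with ⟨hb3, hb5 | hb5 | hb5⟩ | hb5 | hb5 | hb5 <;>
    first
      | exact ⟨a + 1, by omega, by omega, by omega⟩
      | exact ⟨a - 1, by omega, by omega, by omega⟩
      | exact ⟨b + 1, by omega, by omega, by omega⟩
      | exact ⟨b - 1, by omega, by omega, by omega⟩

theorem isAdjGen_pathCycleGen (hn : 7 ≤ n) (h15 : n % 5 = 1 ∨ n % 5 = 3)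
    {G : SimpleGraph (Fin n)} (hPG : pathGraph n ≤ G) (hGC : G ≤ cycleGraph n) :
    IsAdjGen G (pathCycleGen n) := by
  intro x y hx hy hxy
  obtain ⟨w, hw, hwD, hsep⟩ := exists_separating_index hn h15 x.isLt y.isLt
    (Fin.val_ne_of_ne hxy) hx hy
  have hadj : ∀ u : Fin n, w + 1 = u.val ∨ u.val + 1 = w → G.Adj ⟨w, hw⟩ u :=
    fun u h => hPG (pathGraph_adj.2 h)
  have hnadj : ∀ u : Fin n,
      ¬(w + 1 = u.val ∨ u.val + 1 = w ∨ w = 0 ∧ u.val = n - 1 ∨ u.val = 0 ∧ w = n - 1) →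
      ¬G.Adj ⟨w, hw⟩ u :=
    fun u h hwu => h ((cycleGraph_adj_iff_val (by omega)).1 (hGC hwu))
  refine ⟨⟨w, hw⟩, hwD, ?_⟩
  rcases hsep with ⟨h₁, h₂⟩ | ⟨h₁, h₂⟩
  · exact Or.inl ⟨hadj x h₁, hnadj y h₂⟩
  · exact Or.inr ⟨hadj y h₁, hnadj x h₂⟩

theorem sdA_pathGraph_cycleGraph (hn : 7 ≤ n) (h15 : n % 5 = 1 ∨ n % 5 = 3) :
    SdA {pathGraph n, cycleGraph n} = (2 * n + 2) / 5 := by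
  refine le_antisymm ((sdA_le_ncard ?_).trans ncard_pathCycleGen_le) (le_sdA fun S hS => ?_)
  · rintro G (rfl | rfl)
    exacts [isAdjGen_pathCycleGen hn h15 le_rfl pathGraph_le_cycleGraph,
      isAdjGen_pathCycleGen hn h15 pathGraph_le_cycleGraph le_rfl]
  · have := (hS _ (Set.mem_insert_of_mem _ rfl)).two_mul_le_cycleGraph (by omega)
    omega

end Cycle

section GBfam

variable {V : Type*} {G H : SimpleGraph V} {B : Set V}

theorem exists_perm_of_mem_GBfam (hH : H ∈ GBfam G B) :
    ∃ f : Equiv.Perm V, (∀ y, f.symm y ∈ B → y ∈ B) ∧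
      ∀ b ∈ B, ∀ y, H.Adj b y ↔ G.Adj b (f.symm y) := by
  obtain ⟨f, hfix, hnbr⟩ := hH
  refine ⟨f, fun y hy => ?_, fun b hb y => ?_⟩
  · rw [← f.apply_symm_apply y, hfix _ hy]
    exact hy
  · rw [← mem_neighborSet, hnbr b hb, Set.mem_image_equiv, mem_neighborSet]

theorem IsAdjGen.of_mem_GBfam (hG : IsAdjGen G B) (hH : H ∈ GBfam G B) : IsAdjGen H B := by
  obtain ⟨f, hfB, hadj⟩ := exists_perm_of_mem_GBfam hH
  intro x y hx hy hxy
  obtain ⟨b, hb, hxor⟩ := hG (f.symm x) (f.symm y) (mt (hfB x) hx) (mt (hfB y) hy)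
    (f.symm.injective.ne hxy)
  exact ⟨b, hb, by rwa [hadj b hb, hadj b hb]⟩

theorem exists_not_adj_of_mem_GBfam (hG : ∀ v, ∃ b ∈ B, ¬G.Adj b v) (hH : H ∈ GBfam G B)
    (v : V) : ∃ b ∈ B, ¬H.Adj b v := by
  obtain ⟨f, -, hadj⟩ := exists_perm_of_mem_GBfam hH
  obtain ⟨b, hb, hbv⟩ := hG (f.symm v)
  exact ⟨b, hb, by rwa [hadj b hb]⟩

end GBfam

theorem ncard_eq_sum_ite_mem {α : Type*} [Fintype α] (T : Set α) [DecidablePred (· ∈ T)] :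
    T.ncard = ∑ x, if x ∈ T then 1 else 0 := by
  rw [Finset.sum_boole, Set.filter_mem_univ_eq_toFinset, Set.ncard_eq_toFinset_card', Nat.cast_id]

section Corona

variable {V V' : Type*} {G : SimpleGraph V} {H : SimpleGraph V'}

@[simp]
theorem corona_adj_inr_inr {p q : V × V'} :
    (corona G H).Adj (Sum.inr p) (Sum.inr q) ↔ p.1 = q.1 ∧ H.Adj p.2 q.2 :=
  Iff.rfl

/-- `S ∩ V'_i`, as a subset of `V'`. -/
def coronaFibre (S : Set (V ⊕ V × V')) (i : V) : Set V' :=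
  {b | Sum.inr (i, b) ∈ S}

@[simp]
theorem mem_coronaFibre {S : Set (V ⊕ V × V')} {i : V} {b : V'} :
    b ∈ coronaFibre S i ↔ Sum.inr (i, b) ∈ S :=
  Iff.rfl

theorem isAdjGen_coronaFibre {S : Set (V ⊕ V × V')} (hS : IsAdjGen (corona G H) S) (i : V) :
    IsAdjGen H (coronaFibre S i) := by
  intro x y hx hy hxy
  obtain ⟨s, hs, hxor⟩ := hS (Sum.inr (i, x)) (Sum.inr (i, y)) hx hy (by simpa using hxy)
  rcases s with j | ⟨j, b⟩
  · rcases hxor with ⟨h, h'⟩ | ⟨h, h'⟩ <;> exact absurd h h'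
  · obtain rfl : j = i := by rcases hxor with ⟨⟨h, -⟩, -⟩ | ⟨⟨h, -⟩, -⟩ <;> exact h
    exact ⟨b, hs, by simpa using hxor⟩

theorem inr_mem_undominated_corona {S : Set (V ⊕ V × V')} {i : V} {w : V'}
    (hi : Sum.inl i ∉ S) (hw : w ∈ undominated H (coronaFibre S i)) :
    Sum.inr (i, w) ∈ undominated (corona G H) S := by
  refine ⟨hw.1, ?_⟩
  rintro (j | ⟨j, b⟩) hs hadj
  · obtain rfl : j = i := hadj
    exact hi hs
  · obtain ⟨rfl, hbw⟩ := hadj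
    exact hw.2 b hs hbw

open Classical in
theorem ncard_eq_sum_corona [Fintype V] [Fintype V'] (S : Set (V ⊕ V × V')) :
    S.ncard = ∑ i, ((if Sum.inl i ∈ S then 1 else 0) + (coronaFibre S i).ncard) := by
  rw [ncard_eq_sum_ite_mem, Fintype.sum_sum_type, Fintype.sum_prod_type, ← Finset.sum_add_distrib]
  simp_rw [ncard_eq_sum_ite_mem (coronaFibre S _), mem_coronaFibre]

def coronaGen (i₀ : V) (B : Set V') : Set (V ⊕ V × V') :=
  {x | Sum.elim (· ≠ i₀) (·.2 ∈ B) x}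

theorem isAdjGen_corona_coronaGen {B : Set V'} (hB : IsAdjGen H B)
    (hnd : ∀ w, ∃ b ∈ B, ¬H.Adj b w) (i₀ : V) : IsAdjGen (corona G H) (coronaGen i₀ B) := by
  have hmix : ∀ j w, w ∉ B → ∃ s ∈ coronaGen i₀ B,
      (corona G H).Adj s (Sum.inl i₀) ∧ ¬(corona G H).Adj s (Sum.inr (j, w)) := by
    intro j w hw
    obtain ⟨b, hb, hbw⟩ := hnd w
    exact ⟨Sum.inr (i₀, b), hb, rfl, fun h => hbw h.2⟩
  have hcopies : ∀ i j w w', i ≠ j → i ≠ i₀ → ∃ s ∈ coronaGen i₀ B,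
      (corona G H).Adj s (Sum.inr (i, w)) ∧ ¬(corona G H).Adj s (Sum.inr (j, w')) :=
    fun i j w w' hij hi => ⟨Sum.inl i, hi, rfl, hij⟩
  rintro (i | ⟨i, w⟩) (j | ⟨j, w'⟩) hx hy hxy
  · obtain rfl : i = i₀ := not_not.1 hx
    obtain rfl : j = i := not_not.1 hy
    exact absurd rfl hxy
  · obtain rfl : i = i₀ := not_not.1 hx
    exact (hmix j w' hy).imp fun _ ⟨hs, h⟩ => ⟨hs, Or.inl h⟩
  · obtain rfl : j = i₀ := not_not.1 hy
    exact (hmix i w hx).imp fun _ ⟨hs, h⟩ => ⟨hs, Or.inr h⟩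
  · by_cases hij : i = j
    · subst hij
      obtain ⟨b, hb, hxor⟩ := hB w w' hx hy fun h => hxy (h ▸ rfl)
      exact ⟨Sum.inr (i, b), hb, by simpa using hxor⟩
    · by_cases hi : i = i₀
      · exact (hcopies j i w' w (Ne.symm hij) (hi ▸ Ne.symm hij)).imp
          fun _ ⟨hs, h⟩ => ⟨hs, Or.inr h⟩
      · exact (hcopies i j w w' hij hi).imp fun _ ⟨hs, h⟩ => ⟨hs, Or.inl h⟩

theorem ncard_coronaGen [Fintype V] [Fintype V'] (i₀ : V) (B : Set V') :
    (coronaGen i₀ B).ncard = Fintype.card V * (B.ncard + 1) - 1 := by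
  classical
  have hfibre : ∀ i, coronaFibre (coronaGen i₀ B) i = B := fun _ => rfl
  have hN : 0 < Fintype.card V := Fintype.card_pos_iff.2 ⟨i₀⟩
  have hbase : ∑ i, (if Sum.inl i ∈ coronaGen i₀ B then 1 else 0) = Fintype.card V - 1 := by
    rw [← Finset.card_univ, ← Finset.card_erase_of_mem (Finset.mem_univ i₀), ← Finset.filter_ne',
      Finset.card_filter]
    exact Finset.sum_congr rfl fun i _ => if_congr Iff.rfl rfl rfl
  rw [ncard_eq_sum_corona, Finset.sum_add_distrib, hbase]
  simp only [hfibre, Finset.sum_const, Finset.card_univ, smul_eq_mul, Nat.mul_succ]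
  omega

theorem sdA_coronaFam_le [Fintype V] [Nonempty V] [Fintype V'] {𝒢 : Set (SimpleGraph V)}
    {ℋ : Set (SimpleGraph V')} {B : Set V'}
    (hB : ∀ H ∈ ℋ, IsAdjGen H B ∧ ∀ w, ∃ b ∈ B, ¬H.Adj b w) :
    SdA (coronaFam 𝒢 ℋ) ≤ Fintype.card V * (B.ncard + 1) - 1 := by
  obtain ⟨i₀⟩ := ‹Nonempty V›
  rw [← ncard_coronaGen i₀ B]
  refine sdA_le_ncard ?_
  rintro _ ⟨G, -, H, hH, rfl⟩
  exact isAdjGen_corona_coronaGen (hB H hH).1 (hB H hH).2 i₀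

theorem card_mul_succ_sub_one_le_sum {ι : Type*} [Fintype ι] {f : ι → ℕ} {r : ℕ}
    (hr : ∀ i, r ≤ f i) (hlow : {i | f i ≤ r}.Subsingleton) :
    Fintype.card ι * (r + 1) - 1 ≤ ∑ i, f i := by
  classical
  have hcard : #{i | f i ≤ r} ≤ 1 :=
    Finset.card_le_one.2 fun i hi j hj => hlow (by simpa using hi) (by simpa using hj)
  have : Fintype.card ι * (r + 1) ≤ ∑ i, f i + #{i | f i ≤ r} :=
    calc Fintype.card ι * (r + 1) = ∑ _i : ι, (r + 1) := by simp
      _ ≤ ∑ i, (f i + if f i ≤ r then 1 else 0) :=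
          Finset.sum_le_sum fun i _ => by have := hr i; split_ifs <;> omega
      _ = ∑ i, f i + #{i | f i ≤ r} := by rw [Finset.sum_add_distrib, Finset.sum_boole, Nat.cast_id]
  omega

theorem le_sdA_coronaFam [Fintype V] [Fintype V'] {𝒢 : Set (SimpleGraph V)}
    {ℋ : Set (SimpleGraph V')} {H' : SimpleGraph V'} (hG : G ∈ 𝒢) (hH : H ∈ ℋ) (hH' : H' ∈ ℋ)
    {r : ℕ} (hr : ∀ T, IsAdjGen H' T → r ≤ T.ncard)
    (hdom : ∀ T, IsAdjGen H' T → IsDomSet H T → r < T.ncard) :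
    Fintype.card V * (r + 1) - 1 ≤ SdA (coronaFam 𝒢 ℋ) := by
  classical
  refine le_sdA fun S hS => ?_
  have hSH : IsAdjGen (corona G H) S := hS _ ⟨G, hG, H, hH, rfl⟩
  have hSH' : IsAdjGen (corona G H') S := hS _ ⟨G, hG, H', hH', rfl⟩
  have hundom : ∀ i, (if Sum.inl i ∈ S then 1 else 0) + (coronaFibre S i).ncard ≤ r →
      ∃ w, Sum.inr (i, w) ∈ undominated (corona G H) S := by
    intro i hi
    have hri := hr _ (isAdjGen_coronaFibre hSH' i)
    have hiS : Sum.inl i ∉ S := fun h => by simp only [h, if_true] at hi; omega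
    have hnd : ¬IsDomSet H (coronaFibre S i) := fun hD => by
      have := hdom _ (isAdjGen_coronaFibre hSH' i) hD
      omega
    rw [← undominated_eq_empty_iff, ← Ne, ← Set.nonempty_iff_ne_empty] at hnd
    obtain ⟨w, hw⟩ := hnd
    exact ⟨w, inr_mem_undominated_corona hiS hw⟩
  rw [ncard_eq_sum_corona]
  refine card_mul_succ_sub_one_le_sum
    (fun i => (hr _ (isAdjGen_coronaFibre hSH' i)).trans (Nat.le_add_left _ _))
    fun i hi j hj => ?_
  obtain ⟨wi, hwi⟩ := hundom i hi
  obtain ⟨wj, hwj⟩ := hundom j hj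
  exact congrArg Prod.fst (Sum.inr_injective (hSH.undominated_subsingleton hwi hwj))

end Corona

theorem statement_9 {V : Type*} [Fintype V] [Nontrivial V]
    (𝒢 : Set (SimpleGraph V)) (h𝒢ne : 𝒢.Nonempty)
    (n : ℕ) (hn : 7 ≤ n) (h15 : n % 5 = 1 ∨ n % 5 = 3)
    (Pn Cn : SimpleGraph (Fin n))
    (hPn : Pn = SimpleGraph.pathGraph n)
    (hCn : Cn = Pn ⊔ SimpleGraph.fromEdgeSet {s((⟨0, by omega⟩ : Fin n), (⟨n - 1, by omega⟩ : Fin n))})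
    (B : Set (Fin n)) (hB : IsSimAdjBasis {Pn, Cn} B)
    (ℋ₁ ℋ₂ : Set (SimpleGraph (Fin n)))
    (hsub₁ : ℋ₁ ⊆ GBfam Pn B) (hP : Pn ∈ ℋ₁)
    (hsub₂ : ℋ₂ ⊆ GBfam Cn B) (hC : Cn ∈ ℋ₂) :
    SdA (coronaFam 𝒢 (ℋ₁ ∪ ℋ₂)) = Fintype.card V * ((2 * n + 2) / 5 + 1) - 1 := by
  subst hPn
  rw [← cycleGraph_eq_pathGraph_sup (by omega)] at hCn
  subst hCn
  obtain ⟨hBgen, hBcard⟩ := hB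
  rw [sdA_pathGraph_cycleGraph hn h15] at hBcard
  have hBC : ∀ w, ∃ b ∈ B, ¬(cycleGraph n).Adj b w :=
    exists_not_adj_cycleGraph (by omega) (by omega)
  have hgood : ∀ H ∈ ℋ₁ ∪ ℋ₂, IsAdjGen H B ∧ ∀ w, ∃ b ∈ B, ¬H.Adj b w := by
    rintro H (hH | hH)
    · refine ⟨(hBgen _ (Set.mem_insert _ _)).of_mem_GBfam (hsub₁ hH),
        exists_not_adj_of_mem_GBfam (fun w => ?_) (hsub₁ hH)⟩
      obtain ⟨b, hb, hbw⟩ := hBC w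
      exact ⟨b, hb, fun h => hbw (pathGraph_le_cycleGraph h)⟩
    · exact ⟨(hBgen _ (Set.mem_insert_of_mem _ rfl)).of_mem_GBfam (hsub₂ hH),
        exists_not_adj_of_mem_GBfam hBC (hsub₂ hH)⟩
  obtain ⟨G₀, hG₀⟩ := h𝒢ne
  refine le_antisymm (hBcard ▸ sdA_coronaFam_le hgood)
    (le_sdA_coronaFam hG₀ (Or.inl hP) (Or.inr hC) (fun T hT => ?_) fun T hT hD => ?_)
  · have := hT.two_mul_le_cycleGraph (by omega)
    omega
  · have := hT.two_mul_le_cycleGraph_of_isDomSet (by omega) (hD.mono pathGraph_le_cycleGraph)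
    omega
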